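/- There exists a constant C such that for every integer n ≥ 3 the following holds: let α = (1 2 3) and β = (2 3 4 … n) be permutations of {1,…,n} (so α and β are the generators of the 2-connected (3, n−1)-puzzle). Then every even permutation of {1,…,n} can be written as a product of at most C·n² elements of {α, α⁻¹, β, β⁻¹}. In particular, the subgroup generated by {α, β} contains the alternating group A_n. -/

import Mathlib

/-!
In `Fin n` we have `α = (0 1 2)` and `β = (1 2 … n-1)`. Since `β` fixes `0` and shifts the
other points, `β (0 1 m) β⁻¹ α = (0 2 m+1) (0 1 2) = (0 1 m+1)`, so `(0 1 m)` is a word of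
length `O(m)`; conjugating by a power of `β` gives every `(0 u v)`, and
`(x y z) = (0 x y) (0 y z)`, so every 3-cycle is a word of length `O(n)`. An even permutation
moving `s` points is a product of at most `s ≤ n` 3-cycles, hence a word of length `O(n²)`.
-/

open Equiv Equiv.Perm Finset

section Words

variable {G : Type*} [Group G]

def IsProdOfAtMost (S : Set G) (k : ℕ) (g : G) : Prop :=
  ∃ l : List G, l.length ≤ k ∧ (∀ s ∈ l, s ∈ S) ∧ l.prod = g

namespace IsProdOfAtMost

variable {S T : Set G} {k m : ℕ} {g h : G}

theorem mono (hg : IsProdOfAtMost S k g) (hkm : k ≤ m) : IsProdOfAtMost S m g :=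
  let ⟨l, hl, hS, hprod⟩ := hg
  ⟨l, hl.trans hkm, hS, hprod⟩

theorem one : IsProdOfAtMost S 0 1 :=
  ⟨[], le_rfl, by simp, rfl⟩

theorem of_mem (hg : g ∈ S) : IsProdOfAtMost S 1 g :=
  ⟨[g], le_rfl, by simpa using hg, by simp⟩

theorem mul (hg : IsProdOfAtMost S k g) (hh : IsProdOfAtMost S m h) :
    IsProdOfAtMost S (k + m) (g * h) := by
  obtain ⟨l, hl, hlS, rfl⟩ := hg
  obtain ⟨l', hl', hl'S, rfl⟩ := hh
  refine ⟨l ++ l', by simp only [List.length_append]; omega, ?_, List.prod_append⟩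
  simpa only [List.mem_append, or_imp, forall_and] using ⟨hlS, hl'S⟩

theorem inv (hS : ∀ s ∈ S, s⁻¹ ∈ S) (hg : IsProdOfAtMost S k g) :
    IsProdOfAtMost S k g⁻¹ := by
  obtain ⟨l, hl, hlS, rfl⟩ := hg
  refine ⟨(l.map (·⁻¹)).reverse, by simpa using hl, ?_, (List.prod_inv_reverse l).symm⟩
  simpa only [List.mem_reverse, List.mem_map, forall_exists_index, and_imp,
    forall_apply_eq_imp_iff₂] using fun s hs => hS s (hlS s hs)

theorem pow (hg : IsProdOfAtMost S k g) (i : ℕ) : IsProdOfAtMost S (k * i) (g ^ i) := by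
  induction i with
  | zero => simpa using one
  | succ i ih => simpa only [pow_succ, Nat.mul_succ] using ih.mul hg

theorem conj (hS : ∀ s ∈ S, s⁻¹ ∈ S) (hg : IsProdOfAtMost S k g)
    (hh : IsProdOfAtMost S m h) : IsProdOfAtMost S (2 * k + m) (g * h * g⁻¹) :=
  ((hg.mul hh).mul (hg.inv hS)).mono (by omega)

theorem trans (hg : IsProdOfAtMost S k g) (hST : ∀ s ∈ S, IsProdOfAtMost T m s) :
    IsProdOfAtMost T (k * m) g := by
  obtain ⟨l, hl, hlS, rfl⟩ := hg
  refine (?_ : IsProdOfAtMost T (l.length * m) l.prod).mono (Nat.mul_le_mul_right m hl)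
  clear hl
  induction l with
  | nil => simpa using one
  | cons s l ih =>
    simp only [List.mem_cons, forall_eq_or_imp] at hlS
    simpa only [List.length_cons, List.prod_cons, Nat.succ_mul, Nat.add_comm]
      using (hST s hlS.1).mul (ih hlS.2)

theorem mem_subgroup {H : Subgroup G} (hSH : S ⊆ H) (hg : IsProdOfAtMost S k g) : g ∈ H := by
  obtain ⟨l, -, hlS, rfl⟩ := hg
  exact H.list_prod_mem fun s hs => hSH (hlS s hs)

end IsProdOfAtMost

end Words

namespace Equiv.Perm

section ThreeCycles

variable {α : Type*} [DecidableEq α]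

def threeCycle (x y z : α) : Perm α :=
  swap x y * swap y z

theorem threeCycle_apply_left {x y z : α} (hxy : x ≠ y) (hxz : x ≠ z) :
    threeCycle x y z x = y := by
  simp [threeCycle, swap_apply_of_ne_of_ne hxy hxz]

theorem threeCycle_apply_of_ne {x y z t : α} (hx : t ≠ x) (hy : t ≠ y) (hz : t ≠ z) :
    threeCycle x y z t = t := by
  simp [threeCycle, swap_apply_of_ne_of_ne hy hz, swap_apply_of_ne_of_ne hx hy]

theorem conj_threeCycle (f : Perm α) (x y z : α) :
    f * threeCycle x y z * f⁻¹ = threeCycle (f x) (f y) (f z) := by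
  simp only [threeCycle, swap_apply_apply]
  group

theorem threeCycle_rotate {x y z : α} (hxy : x ≠ y) (hxz : x ≠ z) :
    threeCycle x y z = threeCycle y z x := by
  ext t
  simp only [threeCycle, Perm.mul_apply, swap_apply_def]
  split_ifs <;> simp_all

theorem threeCycle_inv {x y z : α} (hxy : x ≠ y) (hxz : x ≠ z) :
    (threeCycle x y z)⁻¹ = threeCycle x z y := by
  ext t
  simp only [threeCycle, mul_inv_rev, swap_inv, Perm.mul_apply, swap_apply_def]
  split_ifs <;> simp_all

theorem threeCycle_mul_threeCycle {a x y z : α} (hax : a ≠ x) (hay : a ≠ y) :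
    threeCycle a x y * threeCycle a y z = threeCycle x y z := by
  ext t
  simp only [threeCycle, Perm.mul_apply, swap_apply_def]
  split_ifs <;> simp_all

theorem threeCycle_mul_threeCycle' {a x y z : α} (hay : a ≠ y) (haz : a ≠ z) (hxy : x ≠ y)
    (hxz : x ≠ z) (hyz : y ≠ z) :
    threeCycle a y z * threeCycle a x y = threeCycle a x z := by
  ext t
  simp only [threeCycle, Perm.mul_apply, swap_apply_def]
  split_ifs <;> simp_all

def threeCycles (α : Type*) [DecidableEq α] : Set (Perm α) :=
  {σ | ∃ x y z : α, x ≠ y ∧ x ≠ z ∧ y ≠ z ∧ σ = threeCycle x y z}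

variable [Fintype α] {π : Perm α}

theorem sign_threeCycle {x y z : α} (hxy : x ≠ y) (hyz : y ≠ z) :
    sign (threeCycle x y z) = 1 := by
  simp [threeCycle, sign_swap hxy, sign_swap hyz]

theorem exists_mem_support_ne_ne (hπ : sign π = 1) {a : α} (ha : a ∈ π.support) :
    ∃ c ∈ π.support, c ≠ a ∧ c ≠ π a := by
  have h1 : 0 < #π.support := card_pos.2 ⟨a, ha⟩
  have hne1 : #π.support ≠ 1 := π.card_support_ne_one
  have hne2 : #π.support ≠ 2 := fun h => by
    have := (card_support_eq_two.1 h).sign_eq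
    simp_all
  have hcard : #({a, π a} : Finset α) < #π.support := card_le_two.trans_lt (by omega)
  obtain ⟨c, hc, hcab⟩ := exists_mem_notMem_of_card_lt_card hcard
  exact ⟨c, hc, by simpa [not_or] using hcab⟩

theorem support_threeCycle_inv_mul_subset {a c : α} (ha : a ∈ π.support) (hc : c ∈ π.support)
    (hca : c ≠ a) (hcb : c ≠ π a) :
    ((threeCycle a (π a) c)⁻¹ * π).support ⊆ π.support.erase a := by
  intro x hx
  rw [mem_support, Perm.mul_apply, Ne, inv_eq_iff_eq] at hx
  refine mem_erase.2 ⟨?_, ?_⟩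
  · rintro rfl
    exact hx (threeCycle_apply_left (mem_support.1 ha).symm hca.symm).symm
  · by_contra hx'
    have hxa : x ≠ a := fun h => hx' (h ▸ ha)
    have hxb : x ≠ π a := fun h => hx' (h ▸ apply_mem_support.2 ha)
    have hxc : x ≠ c := fun h => hx' (h ▸ hc)
    rw [notMem_support.1 hx', threeCycle_apply_of_ne hxa hxb hxc] at hx
    exact hx rfl

theorem isProdOfAtMost_threeCycles (hπ : sign π = 1) :
    IsProdOfAtMost (threeCycles α) #π.support π := by
  induction hk : #π.support using Nat.strong_induction_on generalizing π with
  | _ k ih =>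
  obtain rfl | hne := eq_or_ne π 1
  · exact IsProdOfAtMost.one.mono (Nat.zero_le k)
  obtain ⟨a, ha⟩ : π.support.Nonempty :=
    nonempty_iff_ne_empty.2 (support_eq_empty_iff.not.2 hne)
  obtain ⟨c, hc, hca, hcb⟩ := exists_mem_support_ne_ne hπ ha
  have hab : a ≠ π a := (mem_support.1 ha).symm
  set σ := threeCycle a (π a) c
  have hσ : σ ∈ threeCycles α := ⟨a, π a, c, hab, hca.symm, hcb.symm, rfl⟩
  have hlt : #(σ⁻¹ * π).support < k := hk ▸
    (card_le_card (support_threeCycle_inv_mul_subset ha hc hca hcb)).trans_lt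
      (card_erase_lt_of_mem ha)
  have hsign : sign (σ⁻¹ * π) = 1 := by simp [σ, hπ, sign_threeCycle hab hcb.symm]
  simpa only [mul_inv_cancel_left] using
    ((IsProdOfAtMost.of_mem hσ).mul (ih _ hlt hsign rfl)).mono (by omega)

end ThreeCycles

end Equiv.Perm

namespace ThreeBPuzzle

variable {n : ℕ}

def hub (hn : 3 ≤ n) : Fin n :=
  ⟨0, Nat.zero_lt_of_lt hn⟩

def genA (hn : 3 ≤ n) : Perm (Fin n) :=
  List.formPerm [hub hn, ⟨1, Nat.lt_of_succ_lt hn⟩, ⟨2, hn⟩]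

def genB (n : ℕ) : Perm (Fin n) :=
  List.formPerm ((List.finRange n).drop 1)

def gens (hn : 3 ≤ n) : Set (Perm (Fin n)) :=
  {genA hn, (genA hn)⁻¹, genB n, (genB n)⁻¹}

theorem inv_mem_gens (hn : 3 ≤ n) : ∀ s ∈ gens hn, s⁻¹ ∈ gens hn := by
  simp only [gens, Set.mem_insert_iff, Set.mem_singleton_iff]
  rintro s (rfl | rfl | rfl | rfl) <;> simp

theorem genA_eq (hn : 3 ≤ n) :
    genA hn = threeCycle (hub hn) ⟨1, Nat.lt_of_succ_lt hn⟩ ⟨2, hn⟩ := by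
  simp [genA, List.formPerm, threeCycle]

theorem genB_apply_hub (hn : 3 ≤ n) : genB n (hub hn) = hub hn :=
  List.formPerm_apply_of_notMem (by simp [hub, List.mem_iff_getElem])

theorem genB_apply {k : ℕ} (hk : 1 ≤ k) (hkn : k + 1 < n) :
    genB n ⟨k, by omega⟩ = ⟨k + 1, hkn⟩ := by
  have hlen : k - 1 + 1 < ((List.finRange n).drop 1).length := by simp; omega
  have h := List.formPerm_apply_lt_getElem _
    ((List.drop_sublist 1 _).nodup (List.nodup_finRange n)) (k - 1) hlen
  have hk : ((List.finRange n).drop 1)[k - 1] = ⟨k, by omega⟩ := by ext; simp; omega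
  have hk' : ((List.finRange n).drop 1)[k - 1 + 1] = ⟨k + 1, hkn⟩ := by ext; simp; omega
  rwa [hk, hk'] at h

theorem genB_pow_apply_hub (hn : 3 ≤ n) (i : ℕ) : (genB n ^ i) (hub hn) = hub hn := by
  induction i with
  | zero => rfl
  | succ i ih => rw [pow_succ', Perm.mul_apply, ih, genB_apply_hub]

theorem genB_pow_apply {i k j : ℕ} (hk : 1 ≤ k) (hj : j < n) (hkj : k + i = j) :
    (genB n ^ i) ⟨k, by omega⟩ = ⟨j, hj⟩ := by
  induction i generalizing j with
  | zero => simp [← hkj]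
  | succ i ih =>
    rw [pow_succ', Perm.mul_apply, ih (j := k + i) (by omega) rfl,
      genB_apply (by omega) (by omega)]
    simp only [Fin.mk.injEq]
    omega

theorem isProdOfAtMost_genB_pow (hn : 3 ≤ n) (i : ℕ) :
    IsProdOfAtMost (gens hn) i (genB n ^ i) := by
  simpa using (IsProdOfAtMost.of_mem (show genB n ∈ gens hn by simp [gens])).pow i

theorem isProdOfAtMost_threeCycle_hub_one (hn : 3 ≤ n) {m : ℕ} (h2 : 2 ≤ m) (hm : m < n) :
    IsProdOfAtMost (gens hn) (3 * m)
      (threeCycle (hub hn) ⟨1, Nat.lt_of_succ_lt hn⟩ ⟨m, hm⟩) := by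
  induction m, h2 using Nat.le_induction with
  | base =>
    rw [← genA_eq hn]
    exact (IsProdOfAtMost.of_mem (by simp [gens])).mono (by omega)
  | succ m h2 ih =>
    have step : genB n * threeCycle (hub hn) ⟨1, Nat.lt_of_succ_lt hn⟩ ⟨m, by omega⟩ *
        (genB n)⁻¹ * genA hn =
        threeCycle (hub hn) ⟨1, Nat.lt_of_succ_lt hn⟩ ⟨m + 1, hm⟩ := by
      rw [conj_threeCycle, genB_apply_hub, genB_apply le_rfl (by omega),
        genB_apply (by omega) hm, genA_eq]
      exact threeCycle_mul_threeCycle' (by grind [hub]) (by grind [hub]) (by grind) (by grind)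
        (by grind)
    rw [← step]
    exact (((isProdOfAtMost_genB_pow hn 1).conj (inv_mem_gens hn) (ih (by omega))).mul
      (.of_mem (by simp [gens]))).mono (by omega)

theorem isProdOfAtMost_threeCycle_hub_of_lt (hn : 3 ≤ n) {u v : ℕ} (hu : 1 ≤ u) (huv : u < v)
    (hv : v < n) :
    IsProdOfAtMost (gens hn) (3 * n) (threeCycle (hub hn) ⟨u, by omega⟩ ⟨v, hv⟩) := by
  have hconj : genB n ^ (u - 1) * threeCycle (hub hn) ⟨1, Nat.lt_of_succ_lt hn⟩
      ⟨v - u + 1, by omega⟩ * (genB n ^ (u - 1))⁻¹ =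
      threeCycle (hub hn) ⟨u, by omega⟩ ⟨v, hv⟩ := by
    rw [conj_threeCycle, genB_pow_apply_hub, genB_pow_apply (j := u) le_rfl _ (by omega),
      genB_pow_apply (j := v) (by omega) _ (by omega)]
  rw [← hconj]
  exact ((isProdOfAtMost_genB_pow hn _).conj (inv_mem_gens hn)
    (isProdOfAtMost_threeCycle_hub_one hn (by omega) _)).mono (by omega)

theorem isProdOfAtMost_threeCycle_hub (hn : 3 ≤ n) {u v : Fin n} (hu : u ≠ hub hn)
    (hv : v ≠ hub hn) (huv : u ≠ v) :
    IsProdOfAtMost (gens hn) (3 * n) (threeCycle (hub hn) u v) := by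
  have hu0 : u.val ≠ 0 := fun h => hu (Fin.ext h)
  have hv0 : v.val ≠ 0 := fun h => hv (Fin.ext h)
  rcases lt_or_gt_of_ne (Fin.val_ne_of_ne huv) with h | h
  · exact isProdOfAtMost_threeCycle_hub_of_lt hn (by omega) h v.isLt
  · rw [← threeCycle_inv hv.symm hu.symm]
    exact (isProdOfAtMost_threeCycle_hub_of_lt hn (by omega) h u.isLt).inv (inv_mem_gens hn)

theorem isProdOfAtMost_threeCycle (hn : 3 ≤ n) {x y z : Fin n} (hxy : x ≠ y) (hxz : x ≠ z)
    (hyz : y ≠ z) : IsProdOfAtMost (gens hn) (6 * n) (threeCycle x y z) := by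
  rcases eq_or_ne x (hub hn) with rfl | hx
  · exact (isProdOfAtMost_threeCycle_hub hn hxy.symm hxz.symm hyz).mono (by omega)
  rcases eq_or_ne y (hub hn) with rfl | hy
  · rw [threeCycle_rotate hxy hxz]
    exact (isProdOfAtMost_threeCycle_hub hn hyz.symm hxy hxz.symm).mono (by omega)
  rcases eq_or_ne z (hub hn) with rfl | hz
  · rw [← threeCycle_rotate hxz.symm hyz.symm]
    exact (isProdOfAtMost_threeCycle_hub hn hxz hyz hxy).mono (by omega)
  rw [← threeCycle_mul_threeCycle hx.symm hy.symm]
  exact ((isProdOfAtMost_threeCycle_hub hn hx hy hxy).mul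
    (isProdOfAtMost_threeCycle_hub hn hy hz hyz)).mono (by omega)

theorem isProdOfAtMost_of_sign_eq_one (hn : 3 ≤ n) {π : Perm (Fin n)} (hπ : sign π = 1) :
    IsProdOfAtMost (gens hn) (6 * n ^ 2) π := by
  have hsupp : #π.support ≤ n := by simpa using card_le_univ π.support
  refine ((isProdOfAtMost_threeCycles hπ).trans (m := 6 * n) ?_).mono (by nlinarith)
  rintro σ ⟨x, y, z, hxy, hxz, hyz, rfl⟩
  exact isProdOfAtMost_threeCycle hn hxy hxz hyz

theorem gens_subset_closure (hn : 3 ≤ n) :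
    gens hn ⊆ Subgroup.closure ({genA hn, genB n} : Set (Perm (Fin n))) := by
  have hA := Subgroup.subset_closure (Set.mem_insert (genA hn) {genB n})
  have hB := Subgroup.subset_closure (Set.mem_insert_of_mem (genA hn) (Set.mem_singleton (genB n)))
  simp only [gens, Set.insert_subset_iff, Set.singleton_subset_iff, SetLike.mem_coe]
  exact ⟨hA, inv_mem hA, hB, inv_mem hB⟩

end ThreeBPuzzle

/-- There is a constant `C` such that for every `n ≥ 3`, with
`α = (1 2 3)` and `β = (2 3 … n)` (the generators of the 2-connected `(3, n-1)`-puzzle,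
0-indexed as `(0 1 2)` and `(1 2 … n-1)` on `Fin n`), every even permutation of `Fin n` is
a product of at most `C * n ^ 2` elements of `{α, α⁻¹, β, β⁻¹}`. In particular, the subgroup
generated by `α` and `β` contains the alternating group. -/
theorem twoConnected_three_b_puzzle_generates_even :
    ∃ C : ℕ, ∀ n : ℕ, ∀ _hn : 3 ≤ n,
      (∀ π : Equiv.Perm (Fin n), Equiv.Perm.sign π = 1 →
        ∃ l : List (Equiv.Perm (Fin n)),
          l.length ≤ C * n ^ 2 ∧
          (∀ g ∈ l,
            g = List.formPerm [(⟨0, by omega⟩ : Fin n), ⟨1, by omega⟩, ⟨2, by omega⟩] ∨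
            g = (List.formPerm [(⟨0, by omega⟩ : Fin n), ⟨1, by omega⟩, ⟨2, by omega⟩])⁻¹ ∨
            g = List.formPerm ((List.finRange n).drop 1) ∨
            g = (List.formPerm ((List.finRange n).drop 1))⁻¹) ∧
          l.prod = π) ∧
      alternatingGroup (Fin n) ≤
        Subgroup.closure
          ({List.formPerm [(⟨0, by omega⟩ : Fin n), ⟨1, by omega⟩, ⟨2, by omega⟩],
            List.formPerm ((List.finRange n).drop 1)} : Set (Equiv.Perm (Fin n))) := by
  refine ⟨6, fun n hn => ⟨fun π hπ => ThreeBPuzzle.isProdOfAtMost_of_sign_eq_one hn hπ,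
    fun π hπ => ?_⟩⟩
  exact (ThreeBPuzzle.isProdOfAtMost_of_sign_eq_one hn hπ).mem_subgroup
    (ThreeBPuzzle.gens_subset_closure hn)
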